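/- arXiv:1304.4562 — 4 statements merged into one kernel-verified Lean document; each statement's English description precedes it below -/
import Mathlib

section
/- For every B ∈ L² divergence-free on the torus, sup_{r ≥ 0} ( K_r(B) − r‖B‖² ) = L(B), where L(B) = sup { ∫_D (B⊗B):(∇z + ∇zᵀ) dx − ‖z‖² : z ∈ C¹ divergence-free }. -/
open MeasureTheory

noncomputable section

/-- Fundamental domain of the flat torus `ℝ^d/ℤ^d`. -/
def cube (d : ℕ) : Set (Fin d → ℝ) := Set.univ.pi fun _ => Set.Ico (0:ℝ) 1

/-- `ℤ^d`-periodicity: functions on the flat torus. -/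
def Per {d : ℕ} {E : Type*} (f : (Fin d → ℝ) → E) : Prop :=
  ∀ (x : Fin d → ℝ) (k : Fin d → ℤ), f (x + fun i => (k i : ℝ)) = f x

/-- partial derivative `∂_j f` of a vector field. -/
def pdv {d : ℕ} (f : (Fin d → ℝ) → (Fin d → ℝ)) (j : Fin d) (x : Fin d → ℝ) : Fin d → ℝ :=
  fderiv ℝ f x (Pi.single j 1)

/-- partial derivative `∂_j f` of a scalar function. -/
def pds {d : ℕ} (f : (Fin d → ℝ) → ℝ) (j : Fin d) (x : Fin d → ℝ) : ℝ :=
  fderiv ℝ f x (Pi.single j 1)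

/-- divergence of a vector field. -/
def diverg {d : ℕ} (f : (Fin d → ℝ) → (Fin d → ℝ)) (x : Fin d → ℝ) : ℝ :=
  ∑ i, pdv f i x i

/-- pointwise divergence-free (for smooth fields). -/
def DivFree {d : ℕ} (f : (Fin d → ℝ) → (Fin d → ℝ)) : Prop := ∀ x, diverg f x = 0

/-- squared `L²` norm over the torus. -/
def l2sq {d : ℕ} (f : (Fin d → ℝ) → (Fin d → ℝ)) : ℝ :=
  ∫ x in cube d, ∑ i, (f x i)^2

/-- an `L²` divergence-free (in the weak sense) vector field on the torus. -/
def L2DivFree {d : ℕ} (B : (Fin d → ℝ) → (Fin d → ℝ)) : Prop :=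
  Per B ∧ Measurable B ∧ IntegrableOn (fun x => ∑ i, (B x i)^2) (cube d) ∧
  ∀ φ : (Fin d → ℝ) → ℝ, ContDiff ℝ 1 φ → Per φ →
    (∫ x in cube d, ∑ i, B x i * pds φ i x) = 0

/-- `(B⊗B):(∇z+∇zᵀ+rI)` pointwise, with `(∇z)_{ij} = ∂_i z_j`. -/
def contr {d : ℕ} (B z : (Fin d → ℝ) → (Fin d → ℝ)) (r : ℝ) (x : Fin d → ℝ) : ℝ :=
  ∑ i, ∑ j, B x i * B x j * (pdv z i x j + pdv z j x i + if i = j then r else 0)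

/-- admissible test fields in the definition of `K_r`:
`C¹`, divergence-free, with `∇z+∇zᵀ+rI ≥ 0` as a symmetric matrix. -/
def Adm (d : ℕ) (r : ℝ) (z : (Fin d → ℝ) → (Fin d → ℝ)) : Prop :=
  ContDiff ℝ 1 z ∧ Per z ∧ DivFree z ∧
  ∀ (x ξ : Fin d → ℝ),
    0 ≤ ∑ i, ∑ j, ξ i * ξ j * (pdv z i x j + pdv z j x i + if i = j then r else 0)

/-- the convex functional `K_r(B)` (value in `EReal`, the sup may be `+∞`). -/
def Kfun (d : ℕ) (r : ℝ) (B : (Fin d → ℝ) → (Fin d → ℝ)) : EReal :=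
  sSup {y : EReal | ∃ z, Adm d r z ∧
    y = (((∫ x in cube d, contr B z r x) - l2sq z : ℝ) : EReal)}

/-- the functional `L(B)` in dual (variational) form. -/
def Lfun (d : ℕ) (B : (Fin d → ℝ) → (Fin d → ℝ)) : EReal :=
  sSup {y : EReal | ∃ z : (Fin d → ℝ) → (Fin d → ℝ), ContDiff ℝ 1 z ∧ Per z ∧ DivFree z ∧
    y = (((∫ x in cube d, contr B z 0 x) - l2sq z : ℝ) : EReal)}

/-- `∇·(B⊗B)`, the vector field with components `∑_j ∂_j (B_i B_j)`. -/
def divBB {d : ℕ} (B : (Fin d → ℝ) → (Fin d → ℝ)) (x : Fin d → ℝ) : Fin d → ℝ :=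
  fun i => ∑ j, fderiv ℝ (fun y => B y i * B y j) x (Pi.single j 1)

/-- `w` is the Helmholtz–Leray projection `ℙu` of `u`: `w` is (smooth, periodic)
divergence-free and `u - w` is a gradient. -/
def IsLeray {d : ℕ} (u w : (Fin d → ℝ) → (Fin d → ℝ)) : Prop :=
  ContDiff ℝ (⊤ : ℕ∞) w ∧ Per w ∧ DivFree w ∧
  ∃ p : (Fin d → ℝ) → ℝ, ContDiff ℝ (⊤ : ℕ∞) p ∧ Per p ∧ ∀ x i, u x i - w x i = pds p i x

-- periodicity of fderiv
lemma fderiv_per {d : ℕ} {z : (Fin d → ℝ) → (Fin d → ℝ)} (hz : Differentiable ℝ z)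
    (hp : Per z) (x : Fin d → ℝ) (k : Fin d → ℤ) :
    fderiv ℝ z (x + fun i => (k i : ℝ)) = fderiv ℝ z x := by
  set c : Fin d → ℝ := fun i => (k i : ℝ)
  have h1 : HasFDerivAt (fun y => z (y + c)) (fderiv ℝ z (x + c)) x := by
    have := (hz (x + c)).hasFDerivAt.comp x ((hasFDerivAt_id x).add_const c)
    simpa using this
  have h2 : (fun y => z (y + c)) = z := funext fun y => hp y k
  rw [h2] at h1
  rw [h1.fderiv]

-- boundedness of pdv
lemma pdv_bound {d : ℕ} {z : (Fin d → ℝ) → (Fin d → ℝ)} (hz : ContDiff ℝ 1 z)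
    (hp : Per z) : ∃ M : ℝ, 0 ≤ M ∧ ∀ (x : Fin d → ℝ) i j, |pdv z i x j| ≤ M := by
  have hcont : ContinuousOn (fderiv ℝ z) (Set.univ.pi fun _ : Fin d => Set.Icc (0:ℝ) 1) :=
    (hz.continuous_fderiv one_ne_zero).continuousOn
  have hK : IsCompact (Set.univ.pi fun _ : Fin d => Set.Icc (0:ℝ) 1) :=
    isCompact_univ_pi fun _ => isCompact_Icc
  obtain ⟨C, hC⟩ := hK.exists_bound_of_continuousOn hcont
  refine ⟨max C 0, le_max_right _ _, fun x i j => ?_⟩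
  set k : Fin d → ℤ := fun i => ⌊x i⌋
  set y : Fin d → ℝ := fun i => Int.fract (x i)
  have hxy : x = y + fun i => (k i : ℝ) := by
    funext i
    simp only [Pi.add_apply, y, k]
    exact (Int.fract_add_floor (x i)).symm
  have hyK : y ∈ Set.univ.pi fun _ : Fin d => Set.Icc (0:ℝ) 1 := by
    intro i _
    exact ⟨Int.fract_nonneg _, (Int.fract_lt_one _).le⟩
  have hfd : fderiv ℝ z x = fderiv ℝ z y := by
    rw [hxy]; exact fderiv_per (hz.differentiable one_ne_zero) hp y k
  have h1 : |pdv z i x j| ≤ ‖fderiv ℝ z y (Pi.single i 1)‖ := by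
    rw [pdv, hfd, ← Real.norm_eq_abs]
    exact norm_le_pi_norm _ j
  have h2 := (fderiv ℝ z y).le_opNorm ((Pi.single i (1:ℝ) : Fin d → ℝ))
  have h3 : ‖(Pi.single i 1 : Fin d → ℝ)‖ = 1 := by rw [Pi.norm_single]; simp
  calc |pdv z i x j| ≤ ‖fderiv ℝ z y‖ * 1 := by rw [← h3]; exact h1.trans h2
    _ = ‖fderiv ℝ z y‖ := mul_one _
    _ ≤ C := hC y hyK
    _ ≤ max C 0 := le_max_left _ _

lemma pdv_cont {d : ℕ} {z : (Fin d → ℝ) → (Fin d → ℝ)} (hz : ContDiff ℝ 1 z)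
    (i j : Fin d) : Continuous fun x => pdv z i x j :=
  (continuous_apply j).comp ((hz.continuous_fderiv one_ne_zero).clm_apply continuous_const)

-- measurability of contr
lemma contr_meas {d : ℕ} {B z : (Fin d → ℝ) → (Fin d → ℝ)} (hmB : Measurable B)
    (hz : ContDiff ℝ 1 z) (r : ℝ) : Measurable (contr B z r) := by
  apply Finset.measurable_sum
  intro i _
  apply Finset.measurable_sum
  intro j _
  exact (((measurable_pi_apply i).comp hmB).mul ((measurable_pi_apply j).comp hmB)).mul
    ((((pdv_cont hz i j).measurable).add ((pdv_cont hz j i).measurable)).add measurable_const)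

-- pointwise decomposition
lemma contr_decomp {d : ℕ} (B z : (Fin d → ℝ) → (Fin d → ℝ)) (r : ℝ) (x : Fin d → ℝ) :
    contr B z r x = contr B z 0 x + r * ∑ i, (B x i)^2 := by
  unfold contr
  have h : ∀ i j : Fin d, B x i * B x j * (pdv z i x j + pdv z j x i + if i = j then r else 0)
      = B x i * B x j * (pdv z i x j + pdv z j x i + if i = j then (0:ℝ) else 0)
        + (if i = j then B x i * B x j * r else 0) := by
    intro i j; by_cases h : i = j <;> simp [h] <;> ring
  simp_rw [h, Finset.sum_add_distrib, Finset.sum_ite_eq, Finset.mem_univ, if_true]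
  congr 1
  rw [Finset.mul_sum]
  exact Finset.sum_congr rfl fun i _ => by ring

lemma sum_sum_eq {d : ℕ} (M : ℝ) (a : Fin d → ℝ) :
    ∑ i : Fin d, ∑ j : Fin d, (M * (a i + a j)) = 2 * M * d * ∑ i, a i := by
  simp only [mul_add, Finset.sum_add_distrib, ← Finset.mul_sum, Finset.sum_const,
    Finset.card_univ, Fintype.card_fin, nsmul_eq_mul]
  ring

lemma contr_integrable {d : ℕ} {B z : (Fin d → ℝ) → (Fin d → ℝ)} (hB : L2DivFree B)
    (hz : ContDiff ℝ 1 z) (hp : Per z) : IntegrableOn (contr B z 0) (cube d) := by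
  obtain ⟨M, hM0, hM⟩ := pdv_bound hz hp
  apply Integrable.mono' ((hB.2.2.1).const_mul (2 * M * d))
    ((contr_meas hB.2.1 hz 0).aestronglyMeasurable)
  filter_upwards with x
  rw [Real.norm_eq_abs]
  have h1 : ∀ i j : Fin d,
      |B x i * B x j * (pdv z i x j + pdv z j x i + if i = j then (0:ℝ) else 0)|
        ≤ M * ((B x i)^2 + (B x j)^2) := by
    intro i j
    have hA : |pdv z i x j + pdv z j x i + if i = j then (0:ℝ) else 0| ≤ 2 * M := by
      rw [ite_self, add_zero]
      exact (abs_add_le _ _).trans (by linarith [hM x i j, hM x j i])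
    have h2 : |B x i * B x j| ≤ ((B x i)^2 + (B x j)^2) / 2 := by
      rw [abs_mul]
      nlinarith [sq_nonneg (|B x i| - |B x j|), sq_abs (B x i), sq_abs (B x j)]
    calc |B x i * B x j * (pdv z i x j + pdv z j x i + if i = j then (0:ℝ) else 0)|
        = |B x i * B x j| * |pdv z i x j + pdv z j x i + if i = j then (0:ℝ) else 0| :=
          abs_mul _ _
      _ ≤ (((B x i)^2 + (B x j)^2) / 2) * (2 * M) :=
          mul_le_mul h2 hA (abs_nonneg _) (by positivity)
      _ = M * ((B x i)^2 + (B x j)^2) := by ring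
  calc |contr B z 0 x|
      ≤ ∑ i, ∑ j, M * ((B x i)^2 + (B x j)^2) := by
        refine (Finset.abs_sum_le_sum_abs _ _).trans (Finset.sum_le_sum fun i _ => ?_)
        exact (Finset.abs_sum_le_sum_abs _ _).trans (Finset.sum_le_sum fun j _ => h1 i j)
    _ = 2 * M * d * ∑ i, (B x i)^2 := sum_sum_eq M _

lemma integral_contr {d : ℕ} {B z : (Fin d → ℝ) → (Fin d → ℝ)} (hB : L2DivFree B)
    (hz : ContDiff ℝ 1 z) (hp : Per z) (r : ℝ) :
    ∫ x in cube d, contr B z r x = (∫ x in cube d, contr B z 0 x) + r * l2sq B := by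
  have h1 : IntegrableOn (contr B z 0) (cube d) := contr_integrable hB hz hp
  have h2 : IntegrableOn (fun x => r * ∑ i, (B x i)^2) (cube d) := (hB.2.2.1).const_mul r
  calc ∫ x in cube d, contr B z r x
      = ∫ x in cube d, (contr B z 0 x + r * ∑ i, (B x i)^2) := by
        simp only [contr_decomp B z r]
    _ = (∫ x in cube d, contr B z 0 x) + ∫ x in cube d, r * ∑ i, (B x i)^2 :=
        integral_add h1 h2
    _ = (∫ x in cube d, contr B z 0 x) + r * l2sq B := by
        rw [integral_const_mul]; rfl

lemma adm_exists {d : ℕ} {z : (Fin d → ℝ) → (Fin d → ℝ)} (hz : ContDiff ℝ 1 z)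
    (hp : Per z) (hd : DivFree z) : ∃ r : ℝ, 0 ≤ r ∧ Adm d r z := by
  obtain ⟨M, hM0, hM⟩ := pdv_bound hz hp
  refine ⟨2 * M * d, by positivity, hz, hp, hd, fun x ξ => ?_⟩
  have h : ∀ i j : Fin d,
      ξ i * ξ j * (pdv z i x j + pdv z j x i + if i = j then 2 * M * (d:ℝ) else 0)
      = ξ i * ξ j * (pdv z i x j + pdv z j x i)
        + (if i = j then ξ i * ξ j * (2 * M * (d:ℝ)) else 0) := by
    intro i j; by_cases h : i = j <;> simp [h] <;> ring
  have hsum : ∑ i, ∑ j, ξ i * ξ j * (pdv z i x j + pdv z j x i + if i = j then 2 * M * (d:ℝ) else 0)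
      = (∑ i, ∑ j, ξ i * ξ j * (pdv z i x j + pdv z j x i))
        + 2 * M * (d:ℝ) * ∑ i, (ξ i)^2 := by
    simp_rw [h, Finset.sum_add_distrib, Finset.sum_ite_eq, Finset.mem_univ, if_true]
    congr 1
    rw [Finset.mul_sum]
    exact Finset.sum_congr rfl fun i _ => by ring
  rw [hsum]
  have hQ : ∀ i j : Fin d, -(2 * M) * (|ξ i| * |ξ j|) ≤ ξ i * ξ j * (pdv z i x j + pdv z j x i) := by
    intro i j
    have hA : |pdv z i x j + pdv z j x i| ≤ 2 * M :=
      (abs_add_le _ _).trans (by linarith [hM x i j, hM x j i])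
    have habs : |ξ i * ξ j * (pdv z i x j + pdv z j x i)| ≤ |ξ i| * |ξ j| * (2 * M) := by
      rw [abs_mul, abs_mul]
      exact mul_le_mul_of_nonneg_left hA (by positivity)
    have := neg_abs_le (ξ i * ξ j * (pdv z i x j + pdv z j x i))
    nlinarith
  have key : ∑ i, ∑ j, (-(2 * M) * (|ξ i| * |ξ j|))
      ≤ ∑ i, ∑ j, ξ i * ξ j * (pdv z i x j + pdv z j x i) :=
    Finset.sum_le_sum fun i _ => Finset.sum_le_sum fun j _ => hQ i j
  have e1 : ∑ i : Fin d, ∑ j : Fin d, (-(2 * M) * (|ξ i| * |ξ j|))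
      = -(2 * M) * ((∑ i, |ξ i|) * (∑ i, |ξ i|)) := by
    rw [Finset.sum_mul_sum]
    simp_rw [Finset.mul_sum]
  have e2 : (∑ i, |ξ i|) * (∑ i, |ξ i|) ≤ (d:ℝ) * ∑ i, (ξ i)^2 := by
    have h3 := sq_sum_le_card_mul_sum_sq (s := (Finset.univ : Finset (Fin d)))
      (f := fun i => |ξ i|)
    rw [sq] at h3
    simp only [sq_abs, Finset.card_univ, Fintype.card_fin] at h3
    exact_mod_cast h3
  have e3 : 2 * M * ((∑ i, |ξ i|) * (∑ i, |ξ i|)) ≤ 2 * M * ((d:ℝ) * ∑ i, (ξ i)^2) :=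
    mul_le_mul_of_nonneg_left e2 (by positivity)
  rw [e1] at key
  nlinarith [key, e3]

/-- `sup_{r ≥ 0} (K_r(B) − r‖B‖²) = L(B)` for `B ∈ L²` divergence-free. -/
theorem iSup_Kfun_sub_eq_Lfun (d : ℕ) (B : (Fin d → ℝ) → (Fin d → ℝ)) (hB : L2DivFree B) :
    (⨆ r : {r : ℝ // 0 ≤ r}, (Kfun d r B - ((r : ℝ) * l2sq B : ℝ))) = Lfun d B := by
  apply le_antisymm
  · apply iSup_le
    rintro ⟨r, hr⟩
    apply EReal.sub_le_of_le_add
    apply sSup_le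
    rintro y ⟨z, ⟨hz1, hzp, hzd, -⟩, rfl⟩
    have hI := integral_contr hB hz1 hzp r
    have hy : ((∫ x in cube d, contr B z r x) - l2sq z : ℝ)
        = ((∫ x in cube d, contr B z 0 x) - l2sq z) + r * l2sq B := by
      rw [hI]; ring
    rw [hy, EReal.coe_add]
    refine add_le_add_left (le_sSup ?_) _
    exact ⟨z, hz1, hzp, hzd, rfl⟩
  · apply sSup_le
    rintro y ⟨z, hz1, hzp, hzd, rfl⟩
    obtain ⟨r, hr0, hAdm⟩ := adm_exists hz1 hzp hzd
    have hI := integral_contr hB hz1 hzp r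
    have key : (((∫ x in cube d, contr B z 0 x) - l2sq z : ℝ) : EReal)
        = (((∫ x in cube d, contr B z r x) - l2sq z : ℝ) : EReal)
          - ((r * l2sq B : ℝ) : EReal) := by
      rw [← EReal.coe_sub]
      norm_cast
      rw [hI]; ring
    rw [key]
    refine le_trans ?_ (le_iSup (fun r : {r : ℝ // 0 ≤ r} => Kfun d r B - ((r : ℝ) * l2sq B : ℝ)) ⟨r, hr0⟩)
    rw [sub_eq_add_neg, sub_eq_add_neg]
    refine add_le_add_left (le_sSup ?_) _
    exact ⟨z, hAdm, rfl⟩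
end
end

section
/- For any smooth admissible pair (B,v) (i.e., divergence-free fields solving the transport equation ∂_t B + ∇·(B⊗v − v⊗B) = 0), the identity d/dt ∫|B|² dx = ‖v − ℙ∇·(B⊗B)‖² − ‖v‖² − ‖ℙ∇·(B⊗B)‖² holds; consequently (B,v) solves the magnetic relaxation equations if and only if d/dt ∫|B|² dx + ‖v‖² + ‖ℙ∇·(B⊗B)‖² ≤ 0. -/
open MeasureTheory

noncomputable section

/-- the transport equation `∂_t B + ∇·(B⊗v − v⊗B) = 0` in conservative form. -/
def TransportEq {d : ℕ} (B v : ℝ → (Fin d → ℝ) → (Fin d → ℝ)) : Prop :=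
  ∀ (t : ℝ) (x : Fin d → ℝ) (i : Fin d),
    deriv (fun s => B s x i) t
      + ∑ j, fderiv ℝ (fun y => B t y i * v t y j - v t y i * B t y j) x (Pi.single j 1) = 0

section helpers
variable {d : ℕ}

lemma cube_measurable : MeasurableSet (cube d) :=
  MeasurableSet.univ_pi fun _ => measurableSet_Ico

lemma cube_subset_Icc : cube d ⊆ Set.Icc (0 : Fin d → ℝ) 1 := by
  intro x hx
  constructor <;> intro i <;>
    [exact (hx i (Set.mem_univ i)).1; exact (hx i (Set.mem_univ i)).2.le]

lemma integrableOn_cube {f : (Fin d → ℝ) → ℝ} (hf : Continuous f) :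
    IntegrableOn f (cube d) :=
  (hf.continuousOn.integrableOn_compact (isCompact_Icc (a := (0 : Fin d → ℝ)) (b := 1))).mono_set
    cube_subset_Icc

lemma volume_cube_lt_top : volume (cube d) < ⊤ :=
  lt_of_le_of_lt (measure_mono cube_subset_Icc)
    (isCompact_Icc (a := (0 : Fin d → ℝ)) (b := 1)).measure_lt_top

/-- component derivative of a vector field -/
lemma fderiv_eval {f : (Fin d → ℝ) → (Fin d → ℝ)} (hf : Differentiable ℝ f)
    (x ξ : Fin d → ℝ) (i : Fin d) :
    fderiv ℝ (fun y => f y i) x ξ = fderiv ℝ f x ξ i := by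
  have h := ((ContinuousLinearMap.proj (R := ℝ) (φ := fun _ : Fin d => ℝ) i).hasFDerivAt.comp x
    (hf x).hasFDerivAt).fderiv
  have : (fun y => f y i) = (ContinuousLinearMap.proj (R := ℝ) (φ := fun _ : Fin d => ℝ) i) ∘ f := rfl
  rw [this, h]
  rfl

lemma Dmul {f g : (Fin d → ℝ) → ℝ} (hf : Differentiable ℝ f) (hg : Differentiable ℝ g)
    (x ξ : Fin d → ℝ) :
    fderiv ℝ (fun y => f y * g y) x ξ = f x * fderiv ℝ g x ξ + g x * fderiv ℝ f x ξ := by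
  rw [fderiv_fun_mul (hf x) (hg x)]
  simp [smul_eq_mul]

lemma Dsum {ι : Type*} (s : Finset ι) {f : ι → (Fin d → ℝ) → ℝ}
    (hf : ∀ i, Differentiable ℝ (f i)) (x ξ : Fin d → ℝ) :
    fderiv ℝ (fun y => ∑ i ∈ s, f i y) x ξ = ∑ i ∈ s, fderiv ℝ (f i) x ξ := by
  rw [fderiv_fun_sum (fun i _ => (hf i) x)]
  simp

lemma Dsub {f g : (Fin d → ℝ) → ℝ} (hf : Differentiable ℝ f) (hg : Differentiable ℝ g)
    (x ξ : Fin d → ℝ) :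
    fderiv ℝ (fun y => f y - g y) x ξ = fderiv ℝ f x ξ - fderiv ℝ g x ξ := by
  rw [fderiv_fun_sub (hf x) (hg x)]; simp

lemma Dadd {f g : (Fin d → ℝ) → ℝ} (hf : Differentiable ℝ f) (hg : Differentiable ℝ g)
    (x ξ : Fin d → ℝ) :
    fderiv ℝ (fun y => f y + g y) x ξ = fderiv ℝ f x ξ + fderiv ℝ g x ξ := by
  rw [fderiv_fun_add (hf x) (hg x)]; simp

lemma Dconstmul (c : ℝ) {f : (Fin d → ℝ) → ℝ} (hf : Differentiable ℝ f) (x ξ : Fin d → ℝ) :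
    fderiv ℝ (fun y => c * f y) x ξ = c * fderiv ℝ f x ξ := by
  rw [fderiv_const_mul (hf x)]; simp

lemma Dneg {f : (Fin d → ℝ) → ℝ} (x ξ : Fin d → ℝ) :
    fderiv ℝ (fun y => -(f y)) x ξ = -(fderiv ℝ f x ξ) := by
  rw [fderiv_fun_neg]; simp

end helpers


lemma insertNth_one {n : ℕ} (i : Fin (n+1)) (y : Fin n → ℝ) :
    i.insertNth (1:ℝ) y
      = i.insertNth (0:ℝ) y + fun j => ((Pi.single i (1:ℤ) : Fin (n+1) → ℤ) j : ℝ) := by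
  funext j
  refine Fin.succAboveCases i ?_ ?_ j
  · simp
  · intro k
    simp [Pi.single_apply, Fin.succAbove_ne i k]

lemma ibp {d : ℕ} (G : Fin d → (Fin d → ℝ) → ℝ) (hG : ∀ j, ContDiff ℝ (⊤ : ℕ∞) (G j))
    (hper : ∀ j, Per (G j)) :
    (∫ x in cube d, ∑ j, fderiv ℝ (G j) x (Pi.single j 1)) = 0 := by
  cases d with
  | zero => simp
  | succ n =>
    have hcont : ∀ j, Continuous fun x => fderiv ℝ (G j) x (Pi.single j (1:ℝ)) := by
      intro j
      exact ((hG j).continuous_fderiv (by simp)).clm_apply continuous_const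
    have key := integral_divergence_of_hasFDerivAt_off_countable
      (a := (0 : Fin (n+1) → ℝ)) (b := (1 : Fin (n+1) → ℝ))
      zero_le_one
      (fun x j => G j x) (fun x => ContinuousLinearMap.pi fun j => fderiv ℝ (G j) x)
      ∅ Set.countable_empty
      (continuousOn_pi.2 fun j => ((hG j).continuous).continuousOn)
      (fun x _ => hasFDerivAt_pi.2 fun j => ((hG j).differentiable (by simp) x).hasFDerivAt)
      (((continuous_finset_sum _ fun j _ => hcont j).continuousOn).integrableOn_compact
        isCompact_Icc)
    have hIco : (∫ x in cube (n+1), ∑ j, fderiv ℝ (G j) x (Pi.single j 1))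
        = ∫ x in Set.Icc (0 : Fin (n+1) → ℝ) 1, ∑ j, fderiv ℝ (G j) x (Pi.single j 1) := by
      unfold cube
      rw [volume_pi, setIntegral_congr_set Measure.univ_pi_Ico_ae_eq_Icc, ← volume_pi]; rfl
    rw [hIco]
    rw [show (∫ x in Set.Icc (0 : Fin (n+1) → ℝ) 1, ∑ j, fderiv ℝ (G j) x (Pi.single j 1))
        = ∫ x in Set.Icc (0 : Fin (n+1) → ℝ) 1,
            ∑ j, (ContinuousLinearMap.pi fun j => fderiv ℝ (G j) x) (Pi.single j 1) j from rfl]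
    rw [key]
    refine Finset.sum_eq_zero fun i _ => ?_
    rw [sub_eq_zero]
    refine setIntegral_congr_fun (measurableSet_Icc) fun y _ => ?_
    show G i (i.insertNth ((1 : Fin (n+1) → ℝ) i) y) = G i (i.insertNth ((0 : Fin (n+1) → ℝ) i) y)
    have : ((1 : Fin (n+1) → ℝ) i) = (1:ℝ) := rfl
    rw [this, show ((0 : Fin (n+1) → ℝ) i) = (0:ℝ) from rfl, insertNth_one]
    exact hper i _ _


lemma hasDerivAt_int_sq {d : ℕ} (B : ℝ → (Fin d → ℝ) → (Fin d → ℝ))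
    (hB : ContDiff ℝ (⊤ : ℕ∞) (fun p : ℝ × (Fin d → ℝ) => B p.1 p.2)) (t : ℝ) :
    HasDerivAt (fun s => ∫ x in cube d, ∑ i, (B s x i)^2)
      (∫ x in cube d, ∑ i, 2 * B t x i * deriv (fun s => B s x i) t) t := by
  have hBi : ∀ i, ContDiff ℝ (⊤ : ℕ∞) (fun p : ℝ × (Fin d → ℝ) => B p.1 p.2 i) := by
    intro i
    exact (ContinuousLinearMap.proj (R := ℝ) (φ := fun _ : Fin d => ℝ) i).contDiff.comp hB
  have hBder : ∀ (s : ℝ) (x : Fin d → ℝ) (i : Fin d),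
      HasDerivAt (fun s' => B s' x i)
        (fderiv ℝ (fun p : ℝ × (Fin d → ℝ) => B p.1 p.2 i) (s, x) (1, 0)) s := by
    intro s x i
    have h1 : HasDerivAt (fun s' : ℝ => (s', x)) ((1 : ℝ), (0 : Fin d → ℝ)) s :=
      (hasDerivAt_id s).prodMk (hasDerivAt_const s x)
    exact (((hBi i).differentiable (by simp)) (s, x)).hasFDerivAt.comp_hasDerivAt s h1
  set F' : ℝ → (Fin d → ℝ) → ℝ := fun s x =>
    ∑ i, 2 * B s x i * fderiv ℝ (fun p : ℝ × (Fin d → ℝ) => B p.1 p.2 i) (s, x) (1, 0) with hF'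
  have hF'cont : Continuous fun p : ℝ × (Fin d → ℝ) => F' p.1 p.2 := by
    refine continuous_finset_sum _ fun i _ => ?_
    exact (continuous_const.mul ((hBi i).continuous)).mul
      (((hBi i).continuous_fderiv (by simp)).clm_apply continuous_const)
  have hder : ∀ (s : ℝ) (x : Fin d → ℝ),
      HasDerivAt (fun s' => ∑ i, (B s' x i)^2) (F' s x) s := by
    intro s x
    have := HasDerivAt.fun_sum (fun i (_ : i ∈ Finset.univ) => (hBder s x i).fun_pow 2)
    refine this.congr_deriv ?_
    refine Finset.sum_congr rfl fun i _ => ?_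
    ring
  -- compact bound
  obtain ⟨C, hC⟩ := (((isCompact_Icc (a := t - 1) (b := t + 1)).prod
      (isCompact_Icc (a := (0 : Fin d → ℝ)) (b := 1)))).exists_bound_of_continuousOn
      hF'cont.continuousOn
  have main := hasDerivAt_integral_of_dominated_loc_of_deriv_le
    (μ := volume.restrict (cube d)) (F := fun s x => ∑ i, (B s x i)^2) (F' := F')
    (bound := fun _ => C) (x₀ := t) (s := Metric.ball t 1) (Metric.ball_mem_nhds t one_pos)
    (Filter.Eventually.of_forall fun s =>
      (continuous_finset_sum _ fun i _ =>
        (((hBi i).continuous.comp (Continuous.prodMk_right s)).pow 2)).aestronglyMeasurable)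
    (integrableOn_cube (continuous_finset_sum _ fun i _ =>
        (((hBi i).continuous.comp (Continuous.prodMk_right t)).pow 2)))
    (hF'cont.comp (Continuous.prodMk_right t)).aestronglyMeasurable
    ?_ (integrableOn_const volume_cube_lt_top.ne)
    (Filter.Eventually.of_forall fun x s _ => hder s x)
  · have heq : (∫ x in cube d, F' t x)
        = ∫ x in cube d, ∑ i, 2 * B t x i * deriv (fun s => B s x i) t := by
      refine integral_congr_ae (Filter.Eventually.of_forall fun x => ?_)
      refine Finset.sum_congr rfl fun i _ => ?_
      rw [(hBder t x i).deriv]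
    rw [← heq]
    exact main.2
  · refine (ae_restrict_mem cube_measurable).mono fun x hx s hs => ?_
    refine hC (s, x) ⟨?_, cube_subset_Icc hx⟩
    rw [Real.ball_eq_Ioo] at hs
    exact Set.mem_Icc.2 ⟨hs.1.le, hs.2.le⟩


lemma key {d : ℕ} (Bt vt wt : (Fin d → ℝ) → (Fin d → ℝ)) (dtB : (Fin d → ℝ) → Fin d → ℝ)
    (hBt : ContDiff ℝ (⊤ : ℕ∞) Bt) (hvt : ContDiff ℝ (⊤ : ℕ∞) vt)
    (hBper : Per Bt) (hvper : Per vt) (hBdiv : DivFree Bt) (hvdiv : DivFree vt)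
    (hw : IsLeray (divBB Bt) wt)
    (htr : ∀ x i, dtB x i
      = - ∑ j, fderiv ℝ (fun y => Bt y i * vt y j - vt y i * Bt y j) x (Pi.single j 1)) :
    (∫ x in cube d, ∑ i, 2 * Bt x i * dtB x i)
      = l2sq (fun x => vt x - wt x) - l2sq vt - l2sq wt := by
  obtain ⟨hwC, hwper, hwdiv, p, hpC, hpper, hp⟩ := hw
  have hBd : Differentiable ℝ Bt := hBt.differentiable (by simp)
  have hvd : Differentiable ℝ vt := hvt.differentiable (by simp)
  have hpd : Differentiable ℝ p := hpC.differentiable (by simp)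
  have hBiC : ∀ i, ContDiff ℝ (⊤ : ℕ∞) (fun y => Bt y i) := fun i =>
    (ContinuousLinearMap.proj (R := ℝ) (φ := fun _ : Fin d => ℝ) i).contDiff.comp hBt
  have hviC : ∀ i, ContDiff ℝ (⊤ : ℕ∞) (fun y => vt y i) := fun i =>
    (ContinuousLinearMap.proj (R := ℝ) (φ := fun _ : Fin d => ℝ) i).contDiff.comp hvt
  have hBid : ∀ i, Differentiable ℝ (fun y => Bt y i) := fun i => (hBiC i).differentiable (by simp)
  have hvid : ∀ i, Differentiable ℝ (fun y => vt y i) := fun i => (hviC i).differentiable (by simp)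
  -- divergence-free in component form
  have divB0 : ∀ x, (∑ j, fderiv ℝ (fun y => Bt y j) x (Pi.single j 1)) = 0 := by
    intro x
    have := hBdiv x
    unfold diverg pdv at this
    rw [← this]
    exact Finset.sum_congr rfl fun j _ => fderiv_eval hBd x _ j
  have divv0 : ∀ x, (∑ j, fderiv ℝ (fun y => vt y j) x (Pi.single j 1)) = 0 := by
    intro x
    have := hvdiv x
    unfold diverg pdv at this
    rw [← this]
    exact Finset.sum_congr rfl fun j _ => fderiv_eval hvd x _ j
  -- value of w
  have wval : ∀ x i, wt x i
      = (∑ j, Bt x j * fderiv ℝ (fun y => Bt y i) x (Pi.single j 1)) - fderiv ℝ p x (Pi.single i 1) := by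
    intro x i
    have h1 := hp x i
    unfold pds at h1
    have h2 : divBB Bt x i = ∑ j, Bt x j * fderiv ℝ (fun y => Bt y i) x (Pi.single j 1) := by
      unfold divBB
      have : ∀ j : Fin d, fderiv ℝ (fun y => Bt y i * Bt y j) x (Pi.single j 1)
          = Bt x i * fderiv ℝ (fun y => Bt y j) x (Pi.single j 1)
            + Bt x j * fderiv ℝ (fun y => Bt y i) x (Pi.single j 1) := fun j =>
        Dmul (hBid i) (hBid j) x _
      rw [Finset.sum_congr rfl fun j _ => this j, Finset.sum_add_distrib,
        ← Finset.mul_sum, divB0, mul_zero, zero_add]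
    linarith [h1, h2]
  -- value of dtB
  have trval : ∀ x i, dtB x i
      = -(∑ j, vt x j * fderiv ℝ (fun y => Bt y i) x (Pi.single j 1))
        + ∑ j, Bt x j * fderiv ℝ (fun y => vt y i) x (Pi.single j 1) := by
    intro x i
    rw [htr x i]
    have : ∀ j : Fin d, fderiv ℝ (fun y => Bt y i * vt y j - vt y i * Bt y j) x (Pi.single j 1)
        = (Bt x i * fderiv ℝ (fun y => vt y j) x (Pi.single j 1)
            + vt x j * fderiv ℝ (fun y => Bt y i) x (Pi.single j 1))
          - (vt x i * fderiv ℝ (fun y => Bt y j) x (Pi.single j 1)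
            + Bt x j * fderiv ℝ (fun y => vt y i) x (Pi.single j 1)) := by
      intro j
      rw [Dsub (by exact (hBid i).mul (hvid j)) (by exact (hvid i).mul (hBid j)),
        Dmul (hBid i) (hvid j), Dmul (hvid i) (hBid j)]
    rw [Finset.sum_congr rfl fun j _ => this j, Finset.sum_sub_distrib,
      Finset.sum_add_distrib, Finset.sum_add_distrib, ← Finset.mul_sum, ← Finset.mul_sum,
      divv0, divB0, mul_zero, mul_zero, zero_add, zero_add]
    ring
  -- the flux vector field
  set G : Fin d → (Fin d → ℝ) → ℝ := fun j y =>
    -((∑ i, Bt y i * Bt y i) * vt y j) + 2 * ((∑ i, Bt y i * vt y i) * Bt y j)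
      - 2 * (p y * vt y j) with hG
  have hGC : ∀ j, ContDiff ℝ (⊤ : ℕ∞) (G j) := by
    intro j
    exact (((ContDiff.sum fun i _ => (hBiC i).mul (hBiC i)).mul (hviC j)).neg.add
      (contDiff_const.mul ((ContDiff.sum fun i _ => (hBiC i).mul (hviC i)).mul (hBiC j)))).sub
      (contDiff_const.mul (hpC.mul (hviC j)))
  have hGper : ∀ j, Per (G j) := by
    intro j x k
    simp only [hG, hBper x k, hvper x k, hpper x k]
  -- differentiability pieces
  have hA : Differentiable ℝ (fun y => ∑ i, Bt y i * Bt y i) :=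
    Differentiable.fun_sum fun i _ => (hBid i).mul (hBid i)
  have hC : Differentiable ℝ (fun y => ∑ i, Bt y i * vt y i) :=
    Differentiable.fun_sum fun i _ => (hBid i).mul (hvid i)
  -- master pointwise identity
  have master : ∀ x, (∑ i, 2 * Bt x i * dtB x i) + 2 * (∑ i, vt x i * wt x i)
      = ∑ j, fderiv ℝ (G j) x (Pi.single j 1) := by
    intro x
    have hDG : ∀ j, fderiv ℝ (G j) x (Pi.single j 1)
        = -((∑ i, Bt x i * Bt x i) * fderiv ℝ (fun y => vt y j) x (Pi.single j 1)
              + vt x j * (∑ i, (Bt x i * fderiv ℝ (fun y => Bt y i) x (Pi.single j 1)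
                + Bt x i * fderiv ℝ (fun y => Bt y i) x (Pi.single j 1))))
          + 2 * ((∑ i, Bt x i * vt x i) * fderiv ℝ (fun y => Bt y j) x (Pi.single j 1)
              + Bt x j * (∑ i, (Bt x i * fderiv ℝ (fun y => vt y i) x (Pi.single j 1)
                + vt x i * fderiv ℝ (fun y => Bt y i) x (Pi.single j 1))))
          - 2 * (p x * fderiv ℝ (fun y => vt y j) x (Pi.single j 1)
              + vt x j * fderiv ℝ p x (Pi.single j 1)) := by
      intro j
      rw [hG]
      rw [Dsub (by exact ((hA.mul (hvid j)).neg.add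
            (differentiable_const _ |>.mul (hC.mul (hBid j)))))
          (by exact differentiable_const _ |>.mul (hpd.mul (hvid j)))]
      rw [Dadd (by exact (hA.mul (hvid j)).neg)
          (by exact differentiable_const _ |>.mul (hC.mul (hBid j)))]
      rw [Dneg, Dmul hA (hvid j), Dconstmul _ (by exact hC.mul (hBid j)),
        Dconstmul _ (by exact hpd.mul (hvid j)), Dmul hC (hBid j), Dmul hpd (hvid j),
        Dsum _ (fun i => (hBid i).fun_mul (hBid i)), Dsum _ (fun i => (hBid i).fun_mul (hvid i))]
      rw [Finset.sum_congr rfl fun i _ => Dmul (hBid i) (hBid i) x (Pi.single j 1),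
        Finset.sum_congr rfl fun i _ => Dmul (hBid i) (hvid i) x (Pi.single j 1)]
    rw [Finset.sum_congr rfl fun j _ => hDG j]
    simp only [trval, wval]
    simp only [mul_sub, mul_add, mul_neg, neg_mul, neg_add, neg_neg, Finset.mul_sum,
      Finset.sum_add_distrib, Finset.sum_sub_distrib, Finset.sum_neg_distrib]
    have e1 : ∑ j : Fin d, (∑ i : Fin d, Bt x i * Bt x i)
          * fderiv ℝ (fun y => vt y j) x (Pi.single j 1) = 0 := by
      rw [← Finset.mul_sum, divv0, mul_zero]
    have e2 : ∑ j : Fin d, 2 * ((∑ i : Fin d, Bt x i * vt x i)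
          * fderiv ℝ (fun y => Bt y j) x (Pi.single j 1)) = 0 := by
      simp only [← Finset.mul_sum]
      rw [divB0, mul_zero, mul_zero]
    have e3 : ∑ j : Fin d, 2 * (p x * fderiv ℝ (fun y => vt y j) x (Pi.single j 1)) = 0 := by
      simp only [← Finset.mul_sum]
      rw [divv0, mul_zero, mul_zero]
    have c1 : ∑ a : Fin d, ∑ b : Fin d,
          2 * Bt x a * (vt x b * fderiv ℝ (fun y => Bt y a) x (Pi.single b 1))
        = ∑ a : Fin d, ∑ b : Fin d,
          vt x a * (Bt x b * fderiv ℝ (fun y => Bt y b) x (Pi.single a 1))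
          + ∑ a : Fin d, ∑ b : Fin d,
          vt x a * (Bt x b * fderiv ℝ (fun y => Bt y b) x (Pi.single a 1)) := by
      rw [Finset.sum_comm, ← Finset.sum_add_distrib]
      refine Finset.sum_congr rfl fun a _ => ?_
      rw [← Finset.sum_add_distrib]
      refine Finset.sum_congr rfl fun b _ => ?_
      ring
    have c2 : ∑ a : Fin d, ∑ b : Fin d,
          2 * Bt x a * (Bt x b * fderiv ℝ (fun y => vt y a) x (Pi.single b 1))
        = ∑ a : Fin d, ∑ b : Fin d,
          2 * (Bt x a * (Bt x b * fderiv ℝ (fun y => vt y b) x (Pi.single a 1))) := by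
      rw [Finset.sum_comm]
      refine Finset.sum_congr rfl fun a _ => Finset.sum_congr rfl fun b _ => ?_
      ring
    have c3 : ∑ a : Fin d, ∑ b : Fin d,
          2 * (vt x a * (Bt x b * fderiv ℝ (fun y => Bt y a) x (Pi.single b 1)))
        = ∑ a : Fin d, ∑ b : Fin d,
          2 * (Bt x a * (vt x b * fderiv ℝ (fun y => Bt y b) x (Pi.single a 1))) := by
      rw [Finset.sum_comm]
      refine Finset.sum_congr rfl fun a _ => Finset.sum_congr rfl fun b _ => ?_
      ring
    rw [c1, c2, c3, e1, e2, e3]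
    ring
  -- integral-level conclusion
  have hvw_cont : Continuous fun x => ∑ i, vt x i * wt x i :=
    continuous_finset_sum _ fun i _ =>
      ((continuous_apply i).comp hvt.continuous).mul ((continuous_apply i).comp hwC.continuous)
  have hDG_cont : Continuous fun x => ∑ j, fderiv ℝ (G j) x (Pi.single j 1) :=
    continuous_finset_sum _ fun j _ =>
      ((hGC j).continuous_fderiv (by simp)).clm_apply continuous_const
  have h1 : Continuous fun x => ∑ i, ((vt x - wt x) i)^2 :=
    continuous_finset_sum _ fun i _ =>
      (((continuous_apply i).comp hvt.continuous).sub
        ((continuous_apply i).comp hwC.continuous)).pow 2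
  have h2 : Continuous fun x => ∑ i, (vt x i)^2 :=
    continuous_finset_sum _ fun i _ => ((continuous_apply i).comp hvt.continuous).pow 2
  have h3 : Continuous fun x => ∑ i, (wt x i)^2 :=
    continuous_finset_sum _ fun i _ => ((continuous_apply i).comp hwC.continuous).pow 2
  have step1 : (∫ x in cube d, ∑ i, 2 * Bt x i * dtB x i)
      = ∫ x in cube d, ((∑ j, fderiv ℝ (G j) x (Pi.single j 1)) - 2 * ∑ i, vt x i * wt x i) := by
    refine setIntegral_congr_fun cube_measurable fun x _ => ?_
    have := master x
    linarith
  rw [step1, integral_sub (integrableOn_cube hDG_cont)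
    ((integrableOn_cube hvw_cont).const_mul 2), ibp G hGC hGper, zero_sub]
  unfold l2sq
  have hptw : ∀ x, -(2 * ∑ i, vt x i * wt x i)
      = (∑ i, ((vt x - wt x) i)^2) - (∑ i, (vt x i)^2) - (∑ i, (wt x i)^2) := by
    intro x
    simp only [Pi.sub_apply]
    rw [← Finset.sum_sub_distrib, ← Finset.sum_sub_distrib, Finset.mul_sum,
      ← Finset.sum_neg_distrib]
    exact Finset.sum_congr rfl fun i _ => by ring
  rw [← integral_neg, setIntegral_congr_fun cube_measurable (fun x _ => hptw x),
    integral_sub (integrableOn_cube (h1.fun_sub h2)) (integrableOn_cube h3),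
    integral_sub (integrableOn_cube h1) (integrableOn_cube h2)]


lemma l2sq_nonneg {d : ℕ} (f : (Fin d → ℝ) → (Fin d → ℝ)) : 0 ≤ l2sq f :=
  setIntegral_nonneg cube_measurable fun x _ => Finset.sum_nonneg fun i _ => sq_nonneg _

lemma eq_zero_of_l2sq_eq_zero {d : ℕ} {f : (Fin d → ℝ) → (Fin d → ℝ)} (hf : Continuous f)
    (hper : Per f) (h : l2sq f = 0) : ∀ x, f x = 0 := by
  set g : (Fin d → ℝ) → ℝ := fun x => ∑ i, (f x i)^2 with hg
  have hgcont : Continuous g := continuous_finset_sum _ fun i _ =>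
    ((continuous_apply i).comp hf).pow 2
  have hgnn : ∀ x, 0 ≤ g x := fun x => Finset.sum_nonneg fun i _ => sq_nonneg _
  have hae : g =ᵐ[volume.restrict (cube d)] 0 := by
    rw [← setIntegral_eq_zero_iff_of_nonneg_ae
      (Filter.Eventually.of_forall fun x => hgnn x) (integrableOn_cube hgcont)]
    exact h
  set U : Set (Fin d → ℝ) := Set.univ.pi fun _ => Set.Ioo (0:ℝ) 1 with hU
  have hUopen : IsOpen U := isOpen_set_pi Set.finite_univ fun _ _ => isOpen_Ioo
  have hUsub : U ⊆ cube d := fun x hx i hi => ⟨(hx i hi).1.le, (hx i hi).2⟩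
  have hUzero : ∀ x ∈ U, g x = 0 := by
    intro x0 hx0
    by_contra hne
    have hpos : 0 < g x0 := lt_of_le_of_ne (hgnn x0) (Ne.symm hne)
    have hSopen : IsOpen ({y | 0 < g y} ∩ U) :=
      (isOpen_lt continuous_const hgcont).inter hUopen
    have hSpos : 0 < volume ({y | 0 < g y} ∩ U) :=
      hSopen.measure_pos volume ⟨x0, hpos, hx0⟩
    have hnull : volume ({y | g y ≠ 0} ∩ cube d) = 0 := by
      have := hae
      rw [Filter.EventuallyEq, ae_iff, Measure.restrict_apply] at this
      · exact this
      · exact (measurableSet_eq_fun hgcont.measurable measurable_const).compl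
    have hsub : {y | 0 < g y} ∩ U ⊆ {y | g y ≠ 0} ∩ cube d := fun y hy =>
      ⟨ne_of_gt hy.1, hUsub hy.2⟩
    exact absurd (le_antisymm (hnull ▸ measure_mono hsub) (by positivity)) (ne_of_gt hSpos)
  have hclosure : ∀ x ∈ cube d, g x = 0 := by
    have heq : Set.EqOn g 0 (closure U) :=
      (Set.EqOn.closure (fun x hx => hUzero x hx) hgcont continuous_const)
    intro x hx
    apply heq
    rw [hU, closure_pi_set]
    intro i _
    have : x i ∈ closure (Set.Ioo (0:ℝ) 1) := by
      rw [closure_Ioo (by norm_num : (0:ℝ) ≠ 1)]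
      exact ⟨(hx i (Set.mem_univ i)).1, (hx i (Set.mem_univ i)).2.le⟩
    exact this
  intro x
  set y : Fin d → ℝ := fun i => Int.fract (x i) with hy
  have hycube : y ∈ cube d := fun i _ => ⟨Int.fract_nonneg _, Int.fract_lt_one _⟩
  have hxy : f x = f y := by
    have : x = y + fun i => ((fun i => ⌊x i⌋) i : ℝ) := by
      funext i
      simp only [hy, Pi.add_apply]
      exact (Int.fract_add_floor (x i)).symm
    rw [this, hper y fun i => ⌊x i⌋]
  have hgy : g y = 0 := hclosure y hycube
  funext i
  have := (Finset.sum_eq_zero_iff_of_nonneg fun j (_ : j ∈ Finset.univ) => sq_nonneg (f y j)).1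
    hgy i (Finset.mem_univ i)
  have hfyi : f y i = 0 := by
    have := sq_eq_zero_iff.1 this
    exact this
  rw [hxy]
  simpa using hfyi


/-- for any smooth admissible pair `(B,v)`,
`d/dt ∫|B|² = ‖v − ℙ∇·(B⊗B)‖² − ‖v‖² − ‖ℙ∇·(B⊗B)‖²`; consequently `(B,v)` solves the
magnetic relaxation equations (i.e. `v = ℙ∇·(B⊗B)`) iff
`d/dt ∫|B|² + ‖v‖² + ‖ℙ∇·(B⊗B)‖² ≤ 0`. -/
theorem energy_identity_admissible (d : ℕ) (B v w : ℝ → (Fin d → ℝ) → (Fin d → ℝ))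
    (hB : ContDiff ℝ (⊤ : ℕ∞) (fun p : ℝ × (Fin d → ℝ) => B p.1 p.2))
    (hv : ContDiff ℝ (⊤ : ℕ∞) (fun p : ℝ × (Fin d → ℝ) => v p.1 p.2))
    (hBper : ∀ t, Per (B t)) (hBdiv : ∀ t, DivFree (B t))
    (hvper : ∀ t, Per (v t)) (hvdiv : ∀ t, DivFree (v t))
    (htransport : TransportEq B v)
    (hw : ∀ t, IsLeray (divBB (B t)) (w t)) :
    (∀ t, HasDerivAt (fun s => l2sq (B s))
        (l2sq (fun x => v t x - w t x) - l2sq (v t) - l2sq (w t)) t)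
    ∧ ((∀ t x, v t x = w t x) ↔
        ∀ t, deriv (fun s => l2sq (B s)) t + l2sq (v t) + l2sq (w t) ≤ 0) := by
  have hvt : ∀ t, ContDiff ℝ (⊤ : ℕ∞) (v t) := fun t =>
    hv.comp ((contDiff_const (c := t)).prodMk contDiff_id)
  have hBt : ∀ t, ContDiff ℝ (⊤ : ℕ∞) (B t) := fun t =>
    hB.comp ((contDiff_const (c := t)).prodMk contDiff_id)
  have hderiv : ∀ t, HasDerivAt (fun s => l2sq (B s))
      (l2sq (fun x => v t x - w t x) - l2sq (v t) - l2sq (w t)) t := by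
    intro t
    have h1 := hasDerivAt_int_sq B hB t
    have hkey := key (B t) (v t) (w t) (fun x i => deriv (fun s => B s x i) t)
      (hBt t) (hvt t) (hBper t) (hvper t) (hBdiv t) (hvdiv t) (hw t)
      (fun x i => eq_neg_of_add_eq_zero_left (htransport t x i))
    rw [← hkey]
    exact h1
  refine ⟨hderiv, ?_, ?_⟩
  · intro hvw t
    have h := (hderiv t).deriv
    have hz : l2sq (fun x => v t x - w t x) = 0 := by
      have heq : (fun x => v t x - w t x) = fun _ => (0 : Fin d → ℝ) := by
        funext x
        rw [hvw t x, sub_self]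
      rw [heq]
      simp [l2sq]
    rw [h]
    linarith
  · intro hle t x
    have h := (hderiv t).deriv
    have hineq := hle t
    rw [h] at hineq
    have hz0 : l2sq (fun x => v t x - w t x) = 0 :=
      le_antisymm (by linarith) (l2sq_nonneg _)
    have hcont : Continuous fun x => v t x - w t x :=
      ((hvt t).continuous).sub ((hw t).1.continuous)
    have hper : Per fun x => v t x - w t x := by
      intro y k
      show v t (y + fun i => (k i : ℝ)) - w t (y + fun i => (k i : ℝ)) = v t y - w t y
      rw [hvper t y k, (hw t).2.1 y k]
    have hzero := eq_zero_of_l2sq_eq_zero hcont hper hz0 x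
    exact sub_eq_zero.1 hzero
end
end

section
/- For smooth divergence-free β and ω on the torus, ∫ [β_i β_j (∂_j ω_i + ∂_i ω_j) − 2 β_i ω_j (∂_j β_i − ∂_i β_j)] dx = 0. -/
open MeasureTheory

noncomputable section

/- ---------- auxiliary machinery for Statement 14 ---------- -/

section Aux

variable {d : ℕ}

/-- evaluation at `1` vs `0` in the `i`-th slot of a periodic function agree. -/
lemma per_insertNth {n : ℕ} (F : (Fin (n + 1) → ℝ) → (Fin (n + 1) → ℝ)) (hp : Per F)
    (i : Fin (n + 1)) (x : Fin n → ℝ) :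
    F (i.insertNth (1 : ℝ) x) = F (i.insertNth (0 : ℝ) x) := by
  have h : i.insertNth (1 : ℝ) x
      = i.insertNth (0 : ℝ) x + fun j => ((Pi.single i 1 : Fin (n + 1) → ℤ) j : ℝ) := by
    funext j
    rcases eq_or_ne j i with rfl | hj
    · simp
    · obtain ⟨k, rfl⟩ := Fin.exists_succAbove_eq hj
      simp [Pi.single_eq_of_ne (Fin.succAbove_ne i k)]
  rw [h, hp]

/-- the integral of the divergence of a smooth periodic vector field over the cube vanishes. -/
lemma integral_divergence_zero (F : (Fin d → ℝ) → (Fin d → ℝ))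
    (F' : (Fin d → ℝ) → (Fin d → ℝ) →L[ℝ] (Fin d → ℝ))
    (hF : ∀ x, HasFDerivAt F (F' x) x) (hper : Per F)
    (hcont : Continuous fun x => ∑ i, F' x (Pi.single i 1) i) :
    (∫ x in cube d, ∑ i, F' x (Pi.single i 1) i) = 0 := by
  cases d with
  | zero => simp
  | succ n =>
    have hdiff : Differentiable ℝ F := fun x => (hF x).differentiableAt
    have h1 : (∫ x in cube (n + 1), ∑ i, F' x (Pi.single i 1) i)
        = ∫ x in Set.Icc (0 : Fin (n + 1) → ℝ) 1, ∑ i, F' x (Pi.single i 1) i := by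
      unfold cube
      rw [volume_pi]
      exact setIntegral_congr_set Measure.univ_pi_Ico_ae_eq_Icc
    rw [h1,
      MeasureTheory.integral_divergence_of_hasFDerivAt_off_countable
        (0 : Fin (n + 1) → ℝ) 1 zero_le_one F F' ∅ Set.countable_empty
        hdiff.continuous.continuousOn (fun x _ => hF x)
        (hcont.continuousOn.integrableOn_compact isCompact_Icc)]
    refine Finset.sum_eq_zero fun i _ => ?_
    have hkey : ∀ y : Fin n → ℝ,
        F (i.insertNth (1 : ℝ) y) i = F (i.insertNth (0 : ℝ) y) i := fun y => by
      rw [per_insertNth F hper i y]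
    simp only [Pi.one_apply, Pi.zero_apply, hkey, sub_self]

/-- the CLM `v ↦ (fderiv f x v) i`. -/
def pCLM (f : (Fin d → ℝ) → (Fin d → ℝ)) (x : Fin d → ℝ) (i : Fin d) :
    (Fin d → ℝ) →L[ℝ] ℝ :=
  (ContinuousLinearMap.proj i).comp (fderiv ℝ f x)

/-- `β · ω` pointwise. -/
def Sfun (β ω : (Fin d → ℝ) → (Fin d → ℝ)) (x : Fin d → ℝ) : ℝ := ∑ i, β x i * ω x i

/-- derivative of `Sfun β ω` as a CLM. -/
def SderCLM (β ω : (Fin d → ℝ) → (Fin d → ℝ)) (x : Fin d → ℝ) : (Fin d → ℝ) →L[ℝ] ℝ :=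
  ∑ i, (β x i • pCLM ω x i + ω x i • pCLM β x i)

/-- the flux vector field `F = 2 β (β·ω) - ω |β|²`. -/
def Ffld (β ω : (Fin d → ℝ) → (Fin d → ℝ)) (x : Fin d → ℝ) : Fin d → ℝ :=
  fun j => 2 * β x j * Sfun β ω x - ω x j * Sfun β β x

/-- derivative of the `j`-th component of `Ffld β ω`. -/
def GderCLM (β ω : (Fin d → ℝ) → (Fin d → ℝ)) (x : Fin d → ℝ) (j : Fin d) :
    (Fin d → ℝ) →L[ℝ] ℝ :=
  ((2 * β x j) • SderCLM β ω x + Sfun β ω x • ((2 : ℝ) • pCLM β x j))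
    - (ω x j • SderCLM β β x + Sfun β β x • pCLM ω x j)

/-- derivative of `Ffld β ω` as a CLM. -/
def FderCLM (β ω : (Fin d → ℝ) → (Fin d → ℝ)) (x : Fin d → ℝ) :
    (Fin d → ℝ) →L[ℝ] (Fin d → ℝ) :=
  ContinuousLinearMap.pi (GderCLM β ω x)

lemma double_sum_eq (f g : Fin d → Fin d → ℝ)
    (h : ∀ i j, f i j + f j i = g i j + g j i) :
    (∑ i, ∑ j, f i j) = ∑ i, ∑ j, g i j := by
  have key : ∀ u : Fin d → Fin d → ℝ,
      (∑ i, ∑ j, (u i j + u j i)) = 2 * ∑ i, ∑ j, u i j := by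
    intro u
    have h1 : (∑ i, ∑ j, (u i j + u j i))
        = (∑ i, ∑ j, u i j) + (∑ i, ∑ j, u j i) := by
      simp [Finset.sum_add_distrib]
    have h2 : (∑ i, ∑ j, u j i) = ∑ j, ∑ i, u j i := Finset.sum_comm
    rw [h1, h2]; ring
  have h3 : (∑ i, ∑ j, (f i j + f j i)) = ∑ i, ∑ j, (g i j + g j i) :=
    Finset.sum_congr rfl fun i _ => Finset.sum_congr rfl fun j _ => h i j
  have h4 := key f
  have h5 := key g
  rw [h4, h5] at h3
  linarith

end Aux

/-- for smooth divergence-free `β` and `ω` on the torus,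
`∫ [β_i β_j (∂_j ω_i + ∂_i ω_j) − 2 β_i ω_j (∂_j β_i − ∂_i β_j)] dx = 0`. -/
theorem constant_term_vanishes (d : ℕ) (β ω : (Fin d → ℝ) → (Fin d → ℝ))
    (hβ : ContDiff ℝ (⊤ : ℕ∞) β) (hω : ContDiff ℝ (⊤ : ℕ∞) ω)
    (hβper : Per β) (hωper : Per ω)
    (hβdiv : DivFree β) (hωdiv : DivFree ω) :
    (∫ x in cube d, ∑ i, ∑ j,
        (β x i * β x j * (pdv ω j x i + pdv ω i x j)
          - 2 * β x i * ω x j * (pdv β j x i - pdv β i x j))) = 0 := by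
  classical
  have hβd : Differentiable ℝ β := hβ.differentiable (by simp)
  have hωd : Differentiable ℝ ω := hω.differentiable (by simp)
  -- partial-derivative facts
  have hb : ∀ (x : Fin d → ℝ) (i : Fin d),
      HasFDerivAt (fun y => β y i) (pCLM β x i) x := fun x i =>
    hasFDerivAt_pi'.1 (hβd x).hasFDerivAt i
  have hw : ∀ (x : Fin d → ℝ) (i : Fin d),
      HasFDerivAt (fun y => ω y i) (pCLM ω x i) x := fun x i =>
    hasFDerivAt_pi'.1 (hωd x).hasFDerivAt i
  have hS : ∀ x, HasFDerivAt (Sfun β ω) (SderCLM β ω x) x := fun x =>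
    HasFDerivAt.fun_sum fun i _ => (hb x i).mul (hw x i)
  have hQ : ∀ x, HasFDerivAt (Sfun β β) (SderCLM β β x) x := fun x =>
    HasFDerivAt.fun_sum fun i _ => (hb x i).mul (hb x i)
  have hFd : ∀ x, HasFDerivAt (Ffld β ω) (FderCLM β ω x) x := by
    intro x
    refine hasFDerivAt_pi.2 fun j => ?_
    exact (((hb x j).const_mul 2).mul (hS x)).sub ((hw x j).mul (hQ x))
  -- periodicity of the flux field
  have hFper : Per (Ffld β ω) := by
    intro x k
    funext j
    simp only [Ffld, Sfun]
    rw [hβper x k, hωper x k]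
  -- evaluation of CLMs on basis vectors
  have hpeval : ∀ (f : (Fin d → ℝ) → (Fin d → ℝ)) (x : Fin d → ℝ) (i j : Fin d),
      pCLM f x i (Pi.single j 1) = pdv f j x i := fun f x i j => rfl
  -- explicit formula for the divergence of the flux field
  have hdiv_eval : ∀ x, (∑ i, FderCLM β ω x (Pi.single i 1) i)
      = ∑ j, ((2 * β x j) * (∑ i, (β x i * pdv ω j x i + ω x i * pdv β j x i))
          + Sfun β ω x * (2 * pdv β j x j)
          - (ω x j * (∑ i, (β x i * pdv β j x i + β x i * pdv β j x i))
            + Sfun β β x * pdv ω j x j)) := by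
    intro x
    refine Finset.sum_congr rfl fun j _ => ?_
    simp only [FderCLM, GderCLM, SderCLM, ContinuousLinearMap.pi_apply,
      ContinuousLinearMap.sub_apply, ContinuousLinearMap.add_apply,
      ContinuousLinearMap.smul_apply, ContinuousLinearMap.coe_sum',
      Finset.sum_apply, hpeval, smul_eq_mul, Finset.mul_sum]
  -- continuity of the divergence
  have hBc : Continuous fun x => fderiv ℝ β x := (hβ.fderiv_right (m := 0) (by simp)).continuous
  have hWc : Continuous fun x => fderiv ℝ ω x := (hω.fderiv_right (m := 0) (by simp)).continuous
  have cpβ : ∀ j i, Continuous fun x => pdv β j x i := by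
    intro j i
    exact (continuous_apply i).comp
      ((ContinuousLinearMap.apply ℝ (Fin d → ℝ) (Pi.single j 1)).continuous.comp hBc)
  have cpω : ∀ j i, Continuous fun x => pdv ω j x i := by
    intro j i
    exact (continuous_apply i).comp
      ((ContinuousLinearMap.apply ℝ (Fin d → ℝ) (Pi.single j 1)).continuous.comp hWc)
  have cβ : ∀ j, Continuous fun x => β x j := fun j => (continuous_apply j).comp hβ.continuous
  have cω : ∀ j, Continuous fun x => ω x j := fun j => (continuous_apply j).comp hω.continuous
  have cS : Continuous (Sfun β ω) := continuous_finset_sum _ fun i _ => (cβ i).mul (cω i)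
  have cQ : Continuous (Sfun β β) := continuous_finset_sum _ fun i _ => (cβ i).mul (cβ i)
  have hcont : Continuous fun x => ∑ i, FderCLM β ω x (Pi.single i 1) i := by
    have heq : (fun x => ∑ i, FderCLM β ω x (Pi.single i 1) i)
        = fun x => ∑ j, ((2 * β x j) * (∑ i, (β x i * pdv ω j x i + ω x i * pdv β j x i))
            + Sfun β ω x * (2 * pdv β j x j)
            - (ω x j * (∑ i, (β x i * pdv β j x i + β x i * pdv β j x i))
              + Sfun β β x * pdv ω j x j)) := funext hdiv_eval
    rw [heq]
    refine continuous_finset_sum _ fun j _ => ?_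
    exact (((continuous_const.mul (cβ j)).mul (continuous_finset_sum _ fun i _ =>
        ((cβ i).mul (cpω j i)).add ((cω i).mul (cpβ j i)))).add
      (cS.mul (continuous_const.mul (cpβ j j)))).sub
      (((cω j).mul (continuous_finset_sum _ fun i _ =>
        ((cβ i).mul (cpβ j i)).add ((cβ i).mul (cpβ j i)))).add (cQ.mul (cpω j j)))
  -- pointwise identity: the integrand equals the divergence of the flux field
  have hpt : ∀ x, (∑ i, ∑ j,
        (β x i * β x j * (pdv ω j x i + pdv ω i x j)
          - 2 * β x i * ω x j * (pdv β j x i - pdv β i x j)))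
      = ∑ i, FderCLM β ω x (Pi.single i 1) i := by
    intro x
    rw [hdiv_eval x]
    have hA : ∀ j : Fin d,
        (2 * β x j) * (∑ i, (β x i * pdv ω j x i + ω x i * pdv β j x i))
            + Sfun β ω x * (2 * pdv β j x j)
          - (ω x j * (∑ i, (β x i * pdv β j x i + β x i * pdv β j x i))
            + Sfun β β x * pdv ω j x j)
        = (∑ i, (2 * β x j * (β x i * pdv ω j x i + ω x i * pdv β j x i)
              - ω x j * (β x i * pdv β j x i + β x i * pdv β j x i)))
          + (Sfun β ω x * (2 * pdv β j x j) - Sfun β β x * pdv ω j x j) := by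
      intro j
      rw [Finset.mul_sum, Finset.mul_sum, Finset.sum_sub_distrib]
      ring
    have h0 : (∑ j, (Sfun β ω x * (2 * pdv β j x j) - Sfun β β x * pdv ω j x j)) = 0 := by
      have h1 : (∑ j, pdv β j x j) = 0 := hβdiv x
      have h2 : (∑ j, pdv ω j x j) = 0 := hωdiv x
      have h3 : (∑ j, (Sfun β ω x * (2 * pdv β j x j) - Sfun β β x * pdv ω j x j))
          = (Sfun β ω x * 2) * (∑ j, pdv β j x j) - Sfun β β x * (∑ j, pdv ω j x j) := by
        rw [Finset.mul_sum, Finset.mul_sum, ← Finset.sum_sub_distrib]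
        exact Finset.sum_congr rfl fun j _ => by ring
      rw [h3, h1, h2]; ring
    calc (∑ i, ∑ j, (β x i * β x j * (pdv ω j x i + pdv ω i x j)
          - 2 * β x i * ω x j * (pdv β j x i - pdv β i x j)))
        = ∑ j, ∑ i, (2 * β x j * (β x i * pdv ω j x i + ω x i * pdv β j x i)
              - ω x j * (β x i * pdv β j x i + β x i * pdv β j x i)) := by
          refine double_sum_eq _ _ fun i j => ?_
          ring
      _ = ∑ j, ((∑ i, (2 * β x j * (β x i * pdv ω j x i + ω x i * pdv β j x i)
              - ω x j * (β x i * pdv β j x i + β x i * pdv β j x i)))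
            + (Sfun β ω x * (2 * pdv β j x j) - Sfun β β x * pdv ω j x j)) - 0 := by
          rw [Finset.sum_add_distrib, ← h0]; ring
      _ = ∑ j, ((2 * β x j) * (∑ i, (β x i * pdv ω j x i + ω x i * pdv β j x i))
            + Sfun β ω x * (2 * pdv β j x j)
            - (ω x j * (∑ i, (β x i * pdv β j x i + β x i * pdv β j x i))
              + Sfun β β x * pdv ω j x j)) := by
          rw [sub_zero]
          exact Finset.sum_congr rfl fun j _ => (hA j).symm
  -- conclude
  calc (∫ x in cube d, ∑ i, ∑ j,
        (β x i * β x j * (pdv ω j x i + pdv ω i x j)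
          - 2 * β x i * ω x j * (pdv β j x i - pdv β i x j)))
      = ∫ x in cube d, ∑ i, FderCLM β ω x (Pi.single i 1) i := by
        exact setIntegral_congr_fun
          (MeasurableSet.univ_pi fun _ => measurableSet_Ico) fun x _ => hpt x
    _ = 0 := integral_divergence_zero (Ffld β ω) (FderCLM β ω) hFd hFper hcont
end
end

section
/- The Legendre–Fenchel transform in E of the Born–Infeld Lagrangian L_λ(E,B) = −√(λ² + |B|² − |E|² − λ^{−2}(E·B)²) is H_λ(D,B) = √(λ² + |B|² + λ²|D|² + |D×B|²) = √((λ²+|B|²)(1+|D|²) − (D·B)²); i.e., sup_E [E·D − L_λ(E,B)] = H_λ(D,B) for all D, B ∈ ℝ³. -/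
set_option maxHeartbeats 1000000


noncomputable section

/-- dot product on `ℝ³`. -/
def dot3 (a b : Fin 3 → ℝ) : ℝ := ∑ i, a i * b i

/-- squared euclidean norm on `ℝ³`. -/
def nsq3 (a : Fin 3 → ℝ) : ℝ := ∑ i, (a i)^2

/-- cross product on `ℝ³`. -/
def cross3 (a b : Fin 3 → ℝ) : Fin 3 → ℝ :=
  ![a 1 * b 2 - a 2 * b 1, a 2 * b 0 - a 0 * b 2, a 0 * b 1 - a 1 * b 0]

/-- the Born–Infeld Lagrangian `L_λ(E,B) = −√(λ² + |B|² − |E|² − λ⁻²(E·B)²)`,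
extended by `+∞` where the radicand is negative. -/
def BIL (lam : ℝ) (E B : Fin 3 → ℝ) : EReal :=
  if 0 ≤ lam^2 + nsq3 B - nsq3 E - lam⁻¹^2 * (dot3 E B)^2 then
    ((-Real.sqrt (lam^2 + nsq3 B - nsq3 E - lam⁻¹^2 * (dot3 E B)^2) : ℝ) : EReal)
  else ⊤

lemma nsq3_nonneg (x : Fin 3 → ℝ) : 0 ≤ nsq3 x :=
  Finset.sum_nonneg fun i _ => sq_nonneg _

lemma lagrange3 (x y : Fin 3 → ℝ) :
    nsq3 x * nsq3 y - (dot3 x y)^2 = nsq3 (cross3 x y) := by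
  simp [nsq3, dot3, cross3, Fin.sum_univ_three]; ring

lemma aux_sq3 (x y z : Fin 3 → ℝ) :
    nsq3 x * (dot3 y z)^2 + nsq3 y * (dot3 x z)^2 - 2 * dot3 x y * dot3 x z * dot3 y z
      = nsq3 (fun i => dot3 y z * x i - dot3 x z * y i) := by
  simp [nsq3, dot3, Fin.sum_univ_three]; ring

lemma GC3 (x y z : Fin 3 → ℝ) {t : ℝ} (ht : 0 ≤ t) :
    (dot3 x y + t * (dot3 x z) * (dot3 y z))^2
      ≤ (nsq3 x + t * (dot3 x z)^2) * (nsq3 y + t * (dot3 y z)^2) := by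
  have h1 := lagrange3 x y
  have h3 := nsq3_nonneg (cross3 x y)
  have h5 : 0 ≤ t * (nsq3 x * (dot3 y z)^2 + nsq3 y * (dot3 x z)^2
      - 2 * dot3 x y * dot3 x z * dot3 y z) := by
    rw [aux_sq3]; exact mul_nonneg ht (nsq3_nonneg _)
  nlinarith [h1, h3, h5]

lemma key_ub (lam : ℝ) (hlam : 0 < lam) (D B E : Fin 3 → ℝ)
    (hQ : 0 ≤ lam^2 + nsq3 B - nsq3 E - lam⁻¹^2 * (dot3 E B)^2) :
    dot3 E D + Real.sqrt (lam^2 + nsq3 B - nsq3 E - lam⁻¹^2 * (dot3 E B)^2)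
      ≤ Real.sqrt ((lam^2 + nsq3 B) * (1 + nsq3 D) - (dot3 D B)^2) := by
  set c : ℝ := lam^2 + nsq3 B with hc_def
  set b : ℝ := dot3 D B with hb_def
  have hc : 0 < c := by
    have := nsq3_nonneg B; positivity
  set K : ℝ := c * nsq3 D - b^2 with hK_def
  have hK : 0 ≤ K := by
    have h1 := lagrange3 D B
    have h2 := nsq3_nonneg (cross3 D B)
    have h3 : 0 ≤ lam^2 * nsq3 D := mul_nonneg (sq_nonneg lam) (nsq3_nonneg D)
    rw [hK_def, hc_def]; nlinarith
  set EME : ℝ := nsq3 E + lam⁻¹^2 * (dot3 E B)^2 with hEME_def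
  have hEME : 0 ≤ EME := by
    have := nsq3_nonneg E; positivity
  set Q : ℝ := lam^2 + nsq3 B - nsq3 E - lam⁻¹^2 * (dot3 E B)^2 with hQ_def
  have hQE : Q = c - EME := by rw [hQ_def, hEME_def, hc_def]; ring
  set p : ℝ := dot3 E D with hp_def
  -- step A
  have hx1 : dot3 (fun i => c * D i - b * B i) E
      + lam⁻¹^2 * (dot3 (fun i => c * D i - b * B i) B) * (dot3 E B) = c * p := by
    rw [hp_def, hc_def, hb_def]
    simp only [dot3, nsq3, Fin.sum_univ_three]
    field_simp
    ring
  have hx2 : nsq3 (fun i => c * D i - b * B i)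
      + lam⁻¹^2 * (dot3 (fun i => c * D i - b * B i) B)^2 = c * K := by
    rw [hK_def, hc_def, hb_def]
    simp only [dot3, nsq3, Fin.sum_univ_three]
    field_simp
    ring
  have hGC := GC3 (fun i => c * D i - b * B i) E B (t := lam⁻¹^2) (by positivity)
  rw [hx1, hx2, ← hEME_def] at hGC
  have hp2 : p^2 * c ≤ K * EME := by nlinarith [hGC, hc]
  set sQ : ℝ := Real.sqrt Q with hsQ_def
  have hsQ0 : 0 ≤ sQ := Real.sqrt_nonneg _
  have hsQ2 : sQ^2 = Q := Real.sq_sqrt hQ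
  have hm : 2 * (p * sQ * c) ≤ K * Q + EME * c := by
    have h1 : (p * sQ * c)^2 ≤ (K * Q) * (EME * c) := by
      have h2 : (p * sQ * c)^2 = (p^2 * c) * (Q * c) := by
        rw [mul_pow, mul_pow, hsQ2]; ring
      rw [h2]
      have h3 : (p^2 * c) * (Q * c) ≤ (K * EME) * (Q * c) :=
        mul_le_mul_of_nonneg_right hp2 (mul_nonneg hQ hc.le)
      nlinarith [h3]
    have hS : 0 ≤ K * Q + EME * c :=
      add_nonneg (mul_nonneg hK hQ) (mul_nonneg hEME hc.le)
    have h2 : (2 * (p * sQ * c))^2 ≤ (K * Q + EME * c)^2 := by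
      nlinarith [h1, sq_nonneg (K * Q - EME * c)]
    have h3 : |2 * (p * sQ * c)| ≤ |K * Q + EME * c| := by
      rw [← Real.sqrt_sq_eq_abs, ← Real.sqrt_sq_eq_abs]
      exact Real.sqrt_le_sqrt h2
    calc 2 * (p * sQ * c) ≤ |2 * (p * sQ * c)| := le_abs_self _
      _ ≤ |K * Q + EME * c| := h3
      _ = K * Q + EME * c := abs_of_nonneg hS
  have hRid : c * (1 + nsq3 D) - b^2 = c + K := by rw [hK_def]; ring
  rw [hRid]
  have hsum : (p + sQ)^2 ≤ c + K := by
    have h4 : (p + sQ)^2 * c ≤ (c + K) * c := by nlinarith [hp2, hm, hsQ2]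
    exact le_of_mul_le_mul_right h4 hc
  rcases le_or_gt 0 (p + sQ) with hps | hps
  · exact (Real.le_sqrt hps (by nlinarith [hK, hc])).mpr hsum
  · exact le_trans hps.le (Real.sqrt_nonneg _)

lemma attain (lam : ℝ) (hlam : 0 < lam) (D B : Fin 3 → ℝ) :
    ∃ E : Fin 3 → ℝ,
      0 ≤ lam^2 + nsq3 B - nsq3 E - lam⁻¹^2 * (dot3 E B)^2 ∧
      dot3 E D + Real.sqrt (lam^2 + nsq3 B - nsq3 E - lam⁻¹^2 * (dot3 E B)^2)
        = Real.sqrt ((lam^2 + nsq3 B) * (1 + nsq3 D) - (dot3 D B)^2) := by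
  set c : ℝ := lam^2 + nsq3 B with hc_def
  set b : ℝ := dot3 D B with hb_def
  have hc : 0 < c := by have := nsq3_nonneg B; positivity
  set K : ℝ := c * nsq3 D - b^2 with hK_def
  have hK : 0 ≤ K := by
    have h1 := lagrange3 D B
    have h2 := nsq3_nonneg (cross3 D B)
    have h3 : 0 ≤ lam^2 * nsq3 D := mul_nonneg (sq_nonneg lam) (nsq3_nonneg D)
    rw [hK_def, hc_def]; nlinarith
  set R : ℝ := c * (1 + nsq3 D) - b^2 with hR_def
  have hRK : R = c + K := by rw [hR_def, hK_def]; ring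
  have hR0 : 0 < R := by rw [hRK]; linarith
  set sR : ℝ := Real.sqrt R with hsR_def
  have hsR0 : 0 < sR := Real.sqrt_pos.mpr hR0
  have hsR2 : sR^2 = R := Real.sq_sqrt hR0.le
  have hwB : dot3 (fun i => (c * D i - b * B i) / sR) B
      = (dot3 (fun i => c * D i - b * B i) B) / sR := by
    simp only [dot3, Fin.sum_univ_three]; ring
  have hnsq : nsq3 (fun i => (c * D i - b * B i) / sR)
      = (nsq3 (fun i => c * D i - b * B i)) / R := by
    simp only [nsq3, Fin.sum_univ_three, div_pow, hsR2]; ring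
  have hx2 : nsq3 (fun i => c * D i - b * B i)
      + lam⁻¹^2 * (dot3 (fun i => c * D i - b * B i) B)^2 = c * K := by
    rw [hK_def, hc_def, hb_def]
    simp only [dot3, nsq3, Fin.sum_univ_three]
    field_simp
    ring
  have hQs : lam^2 + nsq3 B - nsq3 (fun i => (c * D i - b * B i) / sR)
      - lam⁻¹^2 * (dot3 (fun i => (c * D i - b * B i) / sR) B)^2 = c^2 / R := by
    rw [hnsq, hwB, div_pow, hsR2]
    have : lam^2 + nsq3 B
        - nsq3 (fun i => c * D i - b * B i) / R
        - lam⁻¹^2 * ((dot3 (fun i => c * D i - b * B i) B)^2 / R)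
        = c - (nsq3 (fun i => c * D i - b * B i)
            + lam⁻¹^2 * (dot3 (fun i => c * D i - b * B i) B)^2) / R := by
      rw [hc_def]; field_simp; ring
    rw [this, hx2, hRK]
    field_simp
    ring
  have hwD : dot3 (fun i => (c * D i - b * B i) / sR) D = K / sR := by
    rw [hK_def, hb_def]
    simp only [dot3, nsq3, Fin.sum_univ_three]
    ring
  refine ⟨fun i => (c * D i - b * B i) / sR, ?_, ?_⟩
  · rw [hQs]; positivity
  · rw [hQs, hwD, Real.sqrt_div (sq_nonneg c), Real.sqrt_sq hc.le, ← hsR_def]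
    rw [← add_div, hsR_def, show K + c = R from by rw [hRK]; ring]
    exact Real.div_sqrt

/-- the Legendre–Fenchel transform in `E` of the Born–Infeld Lagrangian is
the Born–Infeld Hamiltonian: `sup_E [E·D − L_λ(E,B)] = √(λ²+|B|²+λ²|D|²+|D×B|²)
= √((λ²+|B|²)(1+|D|²) − (D·B)²)`. -/
theorem BI_legendre_transform (lam : ℝ) (hlam : 0 < lam) (D B : Fin 3 → ℝ) :
    (⨆ E : Fin 3 → ℝ, (((dot3 E D : ℝ) : EReal) - BIL lam E B))
      = ((Real.sqrt (lam^2 + nsq3 B + lam^2 * nsq3 D + nsq3 (cross3 D B)) : ℝ) : EReal)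
    ∧ Real.sqrt (lam^2 + nsq3 B + lam^2 * nsq3 D + nsq3 (cross3 D B))
      = Real.sqrt ((lam^2 + nsq3 B) * (1 + nsq3 D) - (dot3 D B)^2) := by
  have hrad : lam^2 + nsq3 B + lam^2 * nsq3 D + nsq3 (cross3 D B)
      = (lam^2 + nsq3 B) * (1 + nsq3 D) - (dot3 D B)^2 := by
    linear_combination - lagrange3 D B
  have h2 : Real.sqrt (lam^2 + nsq3 B + lam^2 * nsq3 D + nsq3 (cross3 D B))
      = Real.sqrt ((lam^2 + nsq3 B) * (1 + nsq3 D) - (dot3 D B)^2) := by rw [hrad]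
  refine ⟨?_, h2⟩
  rw [h2]
  apply le_antisymm
  · apply iSup_le
    intro E
    unfold BIL
    split_ifs with h
    · rw [show ((-Real.sqrt (lam^2 + nsq3 B - nsq3 E - lam⁻¹^2 * (dot3 E B)^2) : ℝ) : EReal)
          = ((-Real.sqrt (lam^2 + nsq3 B - nsq3 E - lam⁻¹^2 * (dot3 E B)^2) : ℝ) : EReal) from rfl,
        ← EReal.coe_sub, EReal.coe_le_coe_iff, sub_neg_eq_add]
      exact key_ub lam hlam D B E h
    · rw [EReal.sub_top]
      exact bot_le
  · obtain ⟨E, hQ, hval⟩ := attain lam hlam D B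
    have : (((dot3 E D : ℝ) : EReal) - BIL lam E B)
        = ((Real.sqrt ((lam^2 + nsq3 B) * (1 + nsq3 D) - (dot3 D B)^2) : ℝ) : EReal) := by
      unfold BIL
      rw [if_pos hQ, ← EReal.coe_sub, sub_neg_eq_add, hval]
    calc ((Real.sqrt ((lam^2 + nsq3 B) * (1 + nsq3 D) - (dot3 D B)^2) : ℝ) : EReal)
        = (((dot3 E D : ℝ) : EReal) - BIL lam E B) := this.symm
      _ ≤ _ := le_iSup (fun E => (((dot3 E D : ℝ) : EReal) - BIL lam E B)) E
end
end
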